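/- arXiv:nlin/0104069 — 5 statements merged into one kernel-verified Lean document; each statement's English description precedes it below -/
import Mathlib

section
/- Let U(λ) = λU0 + U1 and V(λ) = λV0 + V1 satisfy the zero-curvature equations [U0,V1] = [V0,U1] and U1_t − V1_x + [U1,V1] = 0. Suppose for s = 1,…,N the column vectors φ^(s) and ψ^(s) satisfy φ^(s)_x = U(λ_s)φ^(s), ψ^(s)_x = −U(λ_s)^T ψ^(s), φ^(s)_t = V(λ_s)φ^(s), ψ^(s)_t = −V(λ_s)^T ψ^(s). Set S = Σ_{s=1}^N φ^(s) ψ^(s)T. Then δU1 = [U0, S] and δV1 = [V0, S] satisfy the linearized equation (δU1)_t − (δV1)_x + [δU1, V1] + [U1, δV1] = 0. -/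
open Matrix

lemma per_s {n : ℕ} (α β : Fin n → ℝ) (U1 V1 : Matrix (Fin n) (Fin n) ℝ)
    (h : ∀ a b, α a * V1 a b - V1 a b * α b = β a * U1 a b - U1 a b * β b)
    (l : ℝ) (φ ψ : Fin n → ℝ) (i j : Fin n) :
    (α i - α j) * ((((l • diagonal β + V1) *ᵥ φ) i) * ψ j
        + φ i * (((-((l • diagonal β + V1)ᵀ)) *ᵥ ψ) j))
    - (β i - β j) * ((((l • diagonal α + U1) *ᵥ φ) i) * ψ j
        + φ i * (((-((l • diagonal α + U1)ᵀ)) *ᵥ ψ) j))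
    + ((diagonal α * vecMulVec φ ψ - vecMulVec φ ψ * diagonal α) * V1
        - V1 * (diagonal α * vecMulVec φ ψ - vecMulVec φ ψ * diagonal α)) i j
    + (U1 * (diagonal β * vecMulVec φ ψ - vecMulVec φ ψ * diagonal β)
        - (diagonal β * vecMulVec φ ψ - vecMulVec φ ψ * diagonal β) * U1) i j
    = 0 := by
  simp only [Matrix.add_mulVec, Matrix.smul_mulVec, transpose_add, transpose_smul,
    diagonal_transpose, Matrix.neg_mulVec, Pi.add_apply, Pi.smul_apply, smul_eq_mul,
    Pi.neg_apply, Matrix.mulVec_diagonal, Matrix.sub_apply, Matrix.mul_apply,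
    Matrix.diagonal_mul, Matrix.mul_diagonal, Matrix.vecMulVec_apply, transpose_apply,
    Matrix.mulVec, dotProduct, Matrix.add_apply, Matrix.smul_apply, Matrix.neg_apply,
    Matrix.diagonal_apply, ite_mul, mul_ite, zero_mul, mul_zero,
    Finset.sum_ite_eq, Finset.sum_ite_eq', Finset.mem_univ, if_true, add_mul, neg_mul,
    neg_add, Finset.sum_add_distrib, Finset.sum_neg_distrib]
  have key : ∑ k : Fin n,
      ((α i - α j) * ψ j * (V1 i k * φ k)
        - (α i - α j) * φ i * (V1 k j * ψ k)
        - (β i - β j) * ψ j * (U1 i k * φ k)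
        + (β i - β j) * φ i * (U1 k j * ψ k)
        + ((α i * (φ i * ψ k) - φ i * ψ k * α k) * V1 k j
            - V1 i k * (α k * (φ k * ψ j) - φ k * ψ j * α j))
        + (U1 i k * (β k * (φ k * ψ j) - φ k * ψ j * β j)
            - (β i * (φ i * ψ k) - φ i * ψ k * β k) * U1 k j)) = 0 := by
    refine Finset.sum_eq_zero fun k _ => ?_
    linear_combination φ k * ψ j * h i k - φ i * ψ k * h k j
  simp only [Finset.sum_add_distrib, Finset.sum_sub_distrib, ← Finset.mul_sum] at key
  linear_combination key

/-- Under the zero-curvature equations `[U0,V1] = [V0,U1]` and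
`U1_t - V1_x + [U1,V1] = 0`, if `φ⁽ˢ⁾, ψ⁽ˢ⁾` solve the Lax and adjoint Lax systems
at `λ = λ_s` and `S = Σ_s φ⁽ˢ⁾ ψ⁽ˢ⁾ᵀ`, then `δU1 = [U0,S]`, `δV1 = [V0,S]` satisfy
the linearized equation `(δU1)_t - (δV1)_x + [δU1,V1] + [U1,δV1] = 0`
(derivatives taken entrywise via `deriv`). -/
theorem stmt4 (n N : ℕ) (α β : Fin n → ℝ) (lam : Fin N → ℝ)
    (U0 V0 : Matrix (Fin n) (Fin n) ℝ)
    (hU0 : U0 = Matrix.diagonal α) (hV0 : V0 = Matrix.diagonal β)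
    (U1 V1 U1t V1x : ℝ → ℝ → Matrix (Fin n) (Fin n) ℝ)
    (hU1t : ∀ x t i j, HasDerivAt (fun τ => U1 x τ i j) (U1t x t i j) t)
    (hV1x : ∀ x t i j, HasDerivAt (fun ξ => V1 ξ t i j) (V1x x t i j) x)
    (hzc1 : ∀ x t, U0 * V1 x t - V1 x t * U0 = V0 * U1 x t - U1 x t * V0)
    (hzc2 : ∀ x t, U1t x t - V1x x t + (U1 x t * V1 x t - V1 x t * U1 x t) = 0)
    (φ ψ : Fin N → ℝ → ℝ → (Fin n → ℝ))
    (hφx : ∀ s x t i, HasDerivAt (fun ξ => φ s ξ t i)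
      (((lam s • U0 + U1 x t) *ᵥ φ s x t) i) x)
    (hψx : ∀ s x t i, HasDerivAt (fun ξ => ψ s ξ t i)
      ((-((lam s • U0 + U1 x t)ᵀ) *ᵥ ψ s x t) i) x)
    (hφt : ∀ s x t i, HasDerivAt (fun τ => φ s x τ i)
      (((lam s • V0 + V1 x t) *ᵥ φ s x t) i) t)
    (hψt : ∀ s x t i, HasDerivAt (fun τ => ψ s x τ i)
      ((-((lam s • V0 + V1 x t)ᵀ) *ᵥ ψ s x t) i) t)
    (S : ℝ → ℝ → Matrix (Fin n) (Fin n) ℝ)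
    (hS : ∀ x t, S x t = ∑ s, vecMulVec (φ s x t) (ψ s x t)) :
    ∀ x t i j,
      deriv (fun τ => (U0 * S x τ - S x τ * U0) i j) t
        - deriv (fun ξ => (V0 * S ξ t - S ξ t * V0) i j) x
        + ((U0 * S x t - S x t * U0) * V1 x t - V1 x t * (U0 * S x t - S x t * U0)) i j
        + (U1 x t * (V0 * S x t - S x t * V0) - (V0 * S x t - S x t * V0) * U1 x t) i j
        = 0 := by
  intro x t i j
  subst hU0 hV0
  -- entrywise derivative of S in t
  have hSt : HasDerivAt (fun τ => S x τ i j)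
      (∑ s, ((((lam s • diagonal β + V1 x t) *ᵥ φ s x t) i) * ψ s x t j
        + φ s x t i * (((-((lam s • diagonal β + V1 x t)ᵀ)) *ᵥ ψ s x t) j))) t := by
    have e : (fun τ => S x τ i j) = fun τ => ∑ s, φ s x τ i * ψ s x τ j := by
      funext τ; rw [hS]; simp [Matrix.sum_apply, vecMulVec_apply]
    rw [e]
    exact HasDerivAt.fun_sum fun s _ => (hφt s x t i).mul (hψt s x t j)
  have hSx : HasDerivAt (fun ξ => S ξ t i j)
      (∑ s, ((((lam s • diagonal α + U1 x t) *ᵥ φ s x t) i) * ψ s x t j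
        + φ s x t i * (((-((lam s • diagonal α + U1 x t)ᵀ)) *ᵥ ψ s x t) j))) x := by
    have e : (fun ξ => S ξ t i j) = fun ξ => ∑ s, φ s ξ t i * ψ s ξ t j := by
      funext ξ; rw [hS]; simp [Matrix.sum_apply, vecMulVec_apply]
    rw [e]
    exact HasDerivAt.fun_sum fun s _ => (hφx s x t i).mul (hψx s x t j)
  have h1 : deriv (fun τ => (diagonal α * S x τ - S x τ * diagonal α) i j) t
      = (α i - α j) * (∑ s, ((((lam s • diagonal β + V1 x t) *ᵥ φ s x t) i) * ψ s x t j
        + φ s x t i * (((-((lam s • diagonal β + V1 x t)ᵀ)) *ᵥ ψ s x t) j))) := by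
    have e : (fun τ => (diagonal α * S x τ - S x τ * diagonal α) i j)
        = fun τ => (α i - α j) * S x τ i j := by
      funext τ
      simp only [Matrix.sub_apply, Matrix.diagonal_mul, Matrix.mul_diagonal]
      ring
    rw [e]
    exact (HasDerivAt.const_mul _ hSt).deriv
  have h2 : deriv (fun ξ => (diagonal β * S ξ t - S ξ t * diagonal β) i j) x
      = (β i - β j) * (∑ s, ((((lam s • diagonal α + U1 x t) *ᵥ φ s x t) i) * ψ s x t j
        + φ s x t i * (((-((lam s • diagonal α + U1 x t)ᵀ)) *ᵥ ψ s x t) j))) := by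
    have e : (fun ξ => (diagonal β * S ξ t - S ξ t * diagonal β) i j)
        = fun ξ => (β i - β j) * S ξ t i j := by
      funext ξ
      simp only [Matrix.sub_apply, Matrix.diagonal_mul, Matrix.mul_diagonal]
      ring
    rw [e]
    exact (HasDerivAt.const_mul _ hSx).deriv
  have hent : ∀ a b, α a * V1 x t a b - V1 x t a b * α b
      = β a * U1 x t a b - U1 x t a b * β b := by
    intro a b
    have := congrFun (congrFun (hzc1 x t) a) b
    simpa only [Matrix.sub_apply, Matrix.diagonal_mul, Matrix.mul_diagonal] using this
  rw [h1, h2, hS x t]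
  simp only [Matrix.mul_sum, Matrix.sum_mul, ← Finset.sum_sub_distrib, Matrix.sum_apply,
    Finset.mul_sum, ← Finset.sum_add_distrib]
  exact Finset.sum_eq_zero fun s _ =>
    per_s α β (U1 x t) (V1 x t) hent (lam s) (φ s x t) (ψ s x t) i j
end

section
/- Define on R^{6N} (with coordinates Φ_i, Ψ_i ∈ R^N for i = 1,2,3) the Hamiltonian H^x = − Σ_{k=1}^3 α_k ⟨AΦ_k, Ψ_k⟩ − Σ_{1≤k<l≤3} ((α_k−α_l)/(γ_k−γ_l)) ⟨Φ_k,Ψ_l⟩⟨Φ_l,Ψ_k⟩, where A = diag(λ_1,…,λ_N). Then the Hamiltonian equations Φ_{i,x} = −∂H^x/∂Ψ_i, Ψ_{i,x} = ∂H^x/∂Φ_i are componentwise equivalent to the constrained spatial flow φ^(s)_x = U(ũ,λ_s)φ^(s), ψ^(s)_x = −U(ũ,λ_s)^T ψ^(s), s = 1,…,N, where U(u,λ) is the 3×3 matrix with diagonal entries α_i λ and off-diagonal entries u_{ij}, and ũ_{ij} = ((α_i−α_j)/(γ_i−γ_j)) ⟨Φ_i,Ψ_j⟩. -/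
/-!
Differentiating `H^x` in the coordinate `Ψ_{is}` gives `-α_i λ_s φ_{is}` from the diagonal term,
while in the interaction term the pairs `k < l` with `l = i` and those with `k = i` together
contribute `-∑_{j ≠ i} ũ_{ij} φ_{js}`, because the coupling `(α_k - α_l)/(γ_k - γ_l)` is symmetric;
this is `-(U(ũ, λ_s) φ^(s))_i`. The Hamiltonian is invariant under `Φ ↔ Ψ`, and this swap
transposes `ũ`, so `∂H^x/∂Φ_{is} = -(U(ũ, λ_s)ᵀ ψ^(s))_i` follows from the same computation.
-/

open Matrix Finset Function

noncomputable section

variable {ι κ : Type*}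

theorem sum_sum_lt_ite_eq_add_ite_eq {R : Type*} [Fintype ι] [LinearOrder ι] [AddCommMonoid R]
    (g : ι → R) (i : ι) :
    ∑ k, ∑ l, (if k < l then (if l = i then g k else 0) + (if k = i then g l else 0) else 0)
      = ∑ j ∈ univ.erase i, g j := by
  have hsplit : ∀ k l, (if k < l then (if l = i then g k else 0) + (if k = i then g l else 0)
      else 0) = (if l = i then (if k < i then g k else 0) else 0)
        + (if k = i then (if i < l then g l else 0) else 0) := by
    intro k l
    split_ifs <;> simp_all
  simp only [hsplit, sum_add_distrib, sum_ite_eq', mem_univ, if_true]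
  rw [sum_comm, ← sum_add_distrib, ← filter_ne', sum_filter]
  refine sum_congr rfl fun j _ => ?_
  rcases lt_trichotomy j i with h | rfl | h
  · simp [h, h.ne, h.not_gt]
  · simp
  · simp [h, h.ne', h.not_gt]

theorem hasDerivAt_dotProduct_update [DecidableEq ι] [Fintype κ] [DecidableEq κ]
    (v : κ → ℝ) (Q : ι → κ → ℝ) (i j : ι) (s : κ) (t : ℝ) :
    HasDerivAt (fun y => v ⬝ᵥ update Q i (update (Q i) s y) j) (if j = i then v s else 0) t := by
  by_cases hj : j = i
  · subst hj
    have hcoord := hasDerivAt_pi.mp (hasDerivAt_update (Q j) s t)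
    simpa [dotProduct, Pi.single_apply] using
      HasDerivAt.fun_sum (u := univ) fun m _ => (hcoord m).const_mul (v m)
  · simpa only [update_of_ne hj, if_neg hj] using hasDerivAt_const t (v ⬝ᵥ Q j)

def coupling (α γ : ι → ℝ) (k l : ι) : ℝ := (α k - α l) / (γ k - γ l)

theorem coupling_comm (α γ : ι → ℝ) (k l : ι) : coupling α γ k l = coupling α γ l k := by
  rw [coupling, coupling, ← neg_div_neg_eq, neg_sub, neg_sub]

-- `lam * P k` is `A Φ_k` for `A = diag(λ_1, …, λ_N)`.
def hamiltonianX [Fintype ι] [LinearOrder ι] [Fintype κ] (α γ : ι → ℝ) (lam : κ → ℝ)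
    (P Q : ι → κ → ℝ) : ℝ :=
  -(∑ k, α k * ((lam * P k) ⬝ᵥ Q k))
    - ∑ k, ∑ l, (if k < l then coupling α γ k l * ((P k ⬝ᵥ Q l) * (P l ⬝ᵥ Q k)) else 0)

def constrainedPotential [Fintype κ] (α γ : ι → ℝ) (P Q : ι → κ → ℝ) (i j : ι) : ℝ :=
  coupling α γ i j * (P i ⬝ᵥ Q j)

def laxMatrix [DecidableEq ι] (α : ι → ℝ) (u : ι → ι → ℝ) (μ : ℝ) : Matrix ι ι ℝ :=
  of fun i j => if i = j then α i * μ else u i j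

theorem laxMatrix_mulVec_apply [Fintype ι] [DecidableEq ι] (α : ι → ℝ) (u : ι → ι → ℝ) (μ : ℝ)
    (v : ι → ℝ) (i : ι) :
    (laxMatrix α u μ *ᵥ v) i = α i * μ * v i + ∑ j ∈ univ.erase i, u i j * v j := by
  rw [mulVec, dotProduct, ← add_sum_erase _ _ (mem_univ i)]
  simp only [laxMatrix, of_apply, if_true]
  congr 1
  exact sum_congr rfl fun j hj => by rw [if_neg (ne_of_mem_erase hj).symm]

theorem laxMatrix_transpose [DecidableEq ι] (α : ι → ℝ) (u : ι → ι → ℝ) (μ : ℝ) :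
    (laxMatrix α u μ)ᵀ = laxMatrix α (fun i j => u j i) μ := by
  ext i j
  by_cases h : i = j
  · subst h; simp [laxMatrix]
  · simp [laxMatrix, h, Ne.symm h]

theorem constrainedPotential_swap [Fintype κ] (α γ : ι → ℝ) (P Q : ι → κ → ℝ) :
    (fun i j => constrainedPotential α γ P Q j i) = constrainedPotential α γ Q P := by
  ext i j
  rw [constrainedPotential, constrainedPotential, coupling_comm, dotProduct_comm]

theorem hamiltonianX_comm [Fintype ι] [LinearOrder ι] [Fintype κ] (α γ : ι → ℝ) (lam : κ → ℝ)
    (P Q : ι → κ → ℝ) : hamiltonianX α γ lam P Q = hamiltonianX α γ lam Q P := by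
  have hdiag : ∀ k, (lam * P k) ⬝ᵥ Q k = (lam * Q k) ⬝ᵥ P k := fun k => by
    simp only [dotProduct, Pi.mul_apply]
    exact sum_congr rfl fun m _ => by ring
  simp only [hamiltonianX, hdiag]
  congr 1
  refine sum_congr rfl fun k _ => sum_congr rfl fun l _ => ?_
  rw [dotProduct_comm (P k), dotProduct_comm (P l), mul_comm (Q l ⬝ᵥ P k)]

theorem hasDerivAt_interaction_update [Fintype κ] [LinearOrder ι] [DecidableEq κ]
    (α γ : ι → ℝ) (P Q : ι → κ → ℝ) (i : ι) (s : κ) (k l : ι) :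
    HasDerivAt (fun y => if k < l then coupling α γ k l *
        ((P k ⬝ᵥ update Q i (update (Q i) s y) l) * (P l ⬝ᵥ update Q i (update (Q i) s y) k))
        else 0)
      (if k < l then (if l = i then constrainedPotential α γ P Q i k * P k s else 0)
        + (if k = i then constrainedPotential α γ P Q i l * P l s else 0) else 0) (Q i s) := by
  by_cases hkl : k < l
  · have hprod := ((hasDerivAt_dotProduct_update (P k) Q i l s (Q i s)).mul
      (hasDerivAt_dotProduct_update (P l) Q i k s (Q i s))).const_mul (coupling α γ k l)
    simp only [if_pos hkl]
    refine hprod.congr_deriv ?_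
    simp only [update_eq_self, constrainedPotential]
    split_ifs with hli hki hki
    · exact absurd (hki.trans hli.symm) hkl.ne
    · subst hli; rw [coupling_comm, dotProduct_comm]; ring
    · subst hki; ring
    · ring
  · simpa only [if_neg hkl] using hasDerivAt_const (Q i s) (0 : ℝ)

theorem hasDerivAt_hamiltonianX_update_right [Fintype ι] [LinearOrder ι] [Fintype κ]
    [DecidableEq κ] (α γ : ι → ℝ) (lam : κ → ℝ) (P Q : ι → κ → ℝ) (i : ι) (s : κ) :
    HasDerivAt (fun y => hamiltonianX α γ lam P (update Q i (update (Q i) s y)))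
      (-(laxMatrix α (constrainedPotential α γ P Q) (lam s) *ᵥ fun j => P j s) i) (Q i s) := by
  have hdiag := HasDerivAt.fun_sum (u := univ) fun k _ =>
    (hasDerivAt_dotProduct_update (lam * P k) Q i k s (Q i s)).const_mul (α k)
  have hint := HasDerivAt.fun_sum (u := univ) fun k _ => HasDerivAt.fun_sum (u := univ)
    fun l _ => hasDerivAt_interaction_update α γ P Q i s k l
  refine (hdiag.fun_neg.fun_sub hint).congr_deriv ?_
  rw [sum_sum_lt_ite_eq_add_ite_eq (fun j => constrainedPotential α γ P Q i j * P j s),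
    laxMatrix_mulVec_apply]
  simp only [Pi.mul_apply, mul_ite, mul_zero, sum_ite_eq', mem_univ, if_true]
  ring

theorem hasDerivAt_hamiltonianX_update_left [Fintype ι] [LinearOrder ι] [Fintype κ]
    [DecidableEq κ] (α γ : ι → ℝ) (lam : κ → ℝ) (P Q : ι → κ → ℝ) (i : ι) (s : κ) :
    HasDerivAt (fun y => hamiltonianX α γ lam (update P i (update (P i) s y)) Q)
      ((-(laxMatrix α (constrainedPotential α γ P Q) (lam s))ᵀ *ᵥ fun j => Q j s) i) (P i s) := by
  have h := hasDerivAt_hamiltonianX_update_right α γ lam Q P i s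
  rw [neg_mulVec, Pi.neg_apply, laxMatrix_transpose, constrainedPotential_swap]
  simpa only [hamiltonianX_comm α γ lam Q] using h

end

theorem stmt6_general (N : ℕ) (α γ : Fin 3 → ℝ)
    (lam : Fin N → ℝ)
    (Hx : (Fin 3 → Fin N → ℝ) → (Fin 3 → Fin N → ℝ) → ℝ)
    (hHx : Hx = fun P Q =>
      -(∑ k, α k * ∑ m, lam m * P k m * Q k m)
        - ∑ k, ∑ l, (if k < l then
            (α k - α l) / (γ k - γ l) * ((∑ m, P k m * Q l m) * (∑ m, P l m * Q k m))
          else 0))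
    (U : (Fin 3 → Fin 3 → ℝ) → ℝ → Matrix (Fin 3) (Fin 3) ℝ)
    (hU : U = fun u lamv => Matrix.of fun i j => if i = j then α i * lamv else u i j)
    (Φ Ψ : ℝ → Fin 3 → Fin N → ℝ) :
    (∀ x (i : Fin 3) (l : Fin N),
        HasDerivAt (fun ξ => Φ ξ i l)
          (-(deriv (fun y => Hx (Φ x) (Function.update (Ψ x) i (Function.update (Ψ x i) l y)))
              (Ψ x i l))) x
      ∧ HasDerivAt (fun ξ => Ψ ξ i l)
          (deriv (fun y => Hx (Function.update (Φ x) i (Function.update (Φ x i) l y)) (Ψ x))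
              (Φ x i l)) x)
    ↔ (∀ x (s : Fin N) (i : Fin 3),
        HasDerivAt (fun ξ => Φ ξ i s)
          ((U (fun i j => (α i - α j) / (γ i - γ j) * ∑ m, Φ x i m * Ψ x j m) (lam s)
              *ᵥ fun j => Φ x j s) i) x
      ∧ HasDerivAt (fun ξ => Ψ ξ i s)
          ((-(U (fun i j => (α i - α j) / (γ i - γ j) * ∑ m, Φ x i m * Ψ x j m) (lam s))ᵀ
              *ᵥ fun j => Ψ x j s) i) x) := by
  obtain rfl : Hx = hamiltonianX α γ lam := hHx
  obtain rfl : U = laxMatrix α := hU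
  simp only [(hasDerivAt_hamiltonianX_update_right α γ lam _ _ _ _).deriv,
    (hasDerivAt_hamiltonianX_update_left α γ lam _ _ _ _).deriv, neg_neg]
  exact ⟨fun h x s i => h x i s, fun h x i s => h x s i⟩

/-- On `ℝ^{6N}` with coordinates `Φ i, Ψ i ∈ ℝ^N` (i = 1,2,3), the
Hamiltonian system `Φ_{i,x} = -∂H^x/∂Ψ_i`, `Ψ_{i,x} = ∂H^x/∂Φ_i` for
`H^x = -Σ_k α_k ⟨AΦ_k,Ψ_k⟩ - Σ_{k<l} ((α_k-α_l)/(γ_k-γ_l)) ⟨Φ_k,Ψ_l⟩⟨Φ_l,Ψ_k⟩`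
is componentwise equivalent to the constrained spatial flow
`φ⁽ˢ⁾_x = U(ũ,λ_s) φ⁽ˢ⁾`, `ψ⁽ˢ⁾_x = -U(ũ,λ_s)ᵀ ψ⁽ˢ⁾`, where
`ũ_{ij} = ((α_i-α_j)/(γ_i-γ_j)) ⟨Φ_i,Ψ_j⟩`. -/
theorem stmt6 (N : ℕ) (α γ : Fin 3 → ℝ)
    (hα : ∀ i j, i ≠ j → α i ≠ α j) (hγ : ∀ i j, i ≠ j → γ i ≠ γ j)
    (lam : Fin N → ℝ) (hlam : ∀ s s', s ≠ s' → lam s ≠ lam s')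
    (Hx : (Fin 3 → Fin N → ℝ) → (Fin 3 → Fin N → ℝ) → ℝ)
    (hHx : Hx = fun P Q =>
      -(∑ k, α k * ∑ m, lam m * P k m * Q k m)
        - ∑ k, ∑ l, (if k < l then
            (α k - α l) / (γ k - γ l) * ((∑ m, P k m * Q l m) * (∑ m, P l m * Q k m))
          else 0))
    (U : (Fin 3 → Fin 3 → ℝ) → ℝ → Matrix (Fin 3) (Fin 3) ℝ)
    (hU : U = fun u lamv => Matrix.of fun i j => if i = j then α i * lamv else u i j)
    (Φ Ψ : ℝ → Fin 3 → Fin N → ℝ) :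
    (∀ x (i : Fin 3) (l : Fin N),
        HasDerivAt (fun ξ => Φ ξ i l)
          (-(deriv (fun y => Hx (Φ x) (Function.update (Ψ x) i (Function.update (Ψ x i) l y)))
              (Ψ x i l))) x
      ∧ HasDerivAt (fun ξ => Ψ ξ i l)
          (deriv (fun y => Hx (Function.update (Φ x) i (Function.update (Φ x i) l y)) (Ψ x))
              (Φ x i l)) x)
    ↔ (∀ x (s : Fin N) (i : Fin 3),
        HasDerivAt (fun ξ => Φ ξ i s)
          ((U (fun i j => (α i - α j) / (γ i - γ j) * ∑ m, Φ x i m * Ψ x j m) (lam s)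
              *ᵥ fun j => Φ x j s) i) x
      ∧ HasDerivAt (fun ξ => Ψ ξ i s)
          ((-(U (fun i j => (α i - α j) / (γ i - γ j) * ∑ m, Φ x i m * Ψ x j m) (lam s))ᵀ
              *ᵥ fun j => Ψ x j s) i) x) :=
  stmt6_general N α γ lam Hx hHx U hU Φ Ψ
end

section
/- Let L(λ) be the 3×3 matrix with entries L(λ)_{ij} = γ_i δ_{ij} + Σ_{l=1}^N φ_{il} ψ_{jl}/(λ − λ_l). Suppose the functions φ_{il}(x), ψ_{il}(x) satisfy the constrained spatial flow φ^(l)_x = U(ũ,λ_l) φ^(l), ψ^(l)_x = −U(ũ,λ_l)^T ψ^(l), where U(u,λ) has diagonal entries α_i λ and off-diagonal entries u_{ij}, and ũ_{ij} = ((α_i−α_j)/(γ_i−γ_j)) ⟨Φ_i,Ψ_j⟩. Then L satisfies the Lax equation (L(λ))_x = [U(ũ,λ), L(λ)] for every λ ∉ {λ_1,…,λ_N}. -/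
open Matrix

/-- If `φ_{il}, ψ_{il}` satisfy the constrained spatial flow
`φ⁽ˡ⁾_x = U(ũ,λ_l) φ⁽ˡ⁾`, `ψ⁽ˡ⁾_x = -U(ũ,λ_l)ᵀ ψ⁽ˡ⁾` with
`ũ_{ij} = ((α_i-α_j)/(γ_i-γ_j)) ⟨Φ_i,Ψ_j⟩`, then the Lax operator
`L(λ)_{ij} = γ_i δ_{ij} + Σ_l φ_{il} ψ_{jl}/(λ-λ_l)` satisfies
`(L(λ))_x = [U(ũ,λ), L(λ)]` for every `λ ∉ {λ_1,…,λ_N}`. -/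
theorem stmt7 (N : ℕ) (α γ : Fin 3 → ℝ)
    (hα : ∀ i j, i ≠ j → α i ≠ α j) (hγ : ∀ i j, i ≠ j → γ i ≠ γ j)
    (lam : Fin N → ℝ) (hlam : ∀ s s', s ≠ s' → lam s ≠ lam s')
    (Φ Ψ : ℝ → Fin 3 → Fin N → ℝ)
    (U : ℝ → ℝ → Matrix (Fin 3) (Fin 3) ℝ)
    (hU : ∀ x lamv, U x lamv = Matrix.of fun i j =>
      if i = j then α i * lamv
      else (α i - α j) / (γ i - γ j) * ∑ m, Φ x i m * Ψ x j m)
    (hΦx : ∀ x (s : Fin N) (i : Fin 3),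
      HasDerivAt (fun ξ => Φ ξ i s) ((U x (lam s) *ᵥ fun j => Φ x j s) i) x)
    (hΨx : ∀ x (s : Fin N) (i : Fin 3),
      HasDerivAt (fun ξ => Ψ ξ i s) ((-(U x (lam s))ᵀ *ᵥ fun j => Ψ x j s) i) x)
    (L : ℝ → ℝ → Matrix (Fin 3) (Fin 3) ℝ)
    (hL : ∀ x lamv, L x lamv = Matrix.of fun i j =>
      (if i = j then γ i else 0) + ∑ l, Φ x i l * Ψ x j l / (lamv - lam l)) :
    ∀ (lamv : ℝ), (∀ l, lamv ≠ lam l) → ∀ x (i j : Fin 3),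
      HasDerivAt (fun ξ => L ξ lamv i j)
        ((U x lamv * L x lamv - L x lamv * U x lamv) i j) x := by
  intro lamv hne x i j
  have hd : ∀ l : Fin N, lamv - lam l ≠ 0 := fun l => sub_ne_zero.mpr (hne l)
  have hderiv : HasDerivAt (fun ξ => L ξ lamv i j)
      (∑ l, ((U x (lam l) *ᵥ fun k => Φ x k l) i * Ψ x j l
        + Φ x i l * ((-(U x (lam l))ᵀ *ᵥ fun k => Ψ x k l) j)) / (lamv - lam l)) x := by
    have heq : (fun ξ => L ξ lamv i j)
        = fun ξ => (if i = j then γ i else 0) + ∑ l, Φ ξ i l * Ψ ξ j l / (lamv - lam l) := by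
      funext ξ; rw [hL]; rfl
    rw [heq]
    exact (HasDerivAt.fun_sum fun l _ => ((hΦx x l i).mul (hΨx x l j)).div_const _).const_add _
  have key : (U x lamv * L x lamv - L x lamv * U x lamv) i j
      = ∑ l, ((U x (lam l) *ᵥ fun k => Φ x k l) i * Ψ x j l
        + Φ x i l * ((-(U x (lam l))ᵀ *ᵥ fun k => Ψ x k l) j)) / (lamv - lam l) := by
    -- rewrite the RHS into a nicer form
    have hDalt : (∑ l, ((U x (lam l) *ᵥ fun k => Φ x k l) i * Ψ x j l
          + Φ x i l * ((-(U x (lam l))ᵀ *ᵥ fun k => Ψ x k l) j)) / (lamv - lam l))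
        = ∑ l, ((∑ k, U x (lam l) i k * Φ x k l) * (Ψ x j l / (lamv - lam l))
          - (Φ x i l / (lamv - lam l)) * (∑ k, Ψ x k l * U x (lam l) k j)) := by
      refine Finset.sum_congr rfl fun l _ => ?_
      simp only [mulVec, dotProduct, Matrix.neg_apply, transpose_apply, neg_mul,
        Finset.sum_neg_distrib]
      rw [show (∑ k, Ψ x k l * U x (lam l) k j) = ∑ k, U x (lam l) k j * Ψ x k l from
        Finset.sum_congr rfl fun k _ => mul_comm _ _]
      ring
    rw [hDalt]
    have hrow : ∀ l : Fin N, ∑ k, U x lamv i k * Φ x k l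
        = (∑ k, U x (lam l) i k * Φ x k l) + α i * (lamv - lam l) * Φ x i l := by
      intro l
      have h1 : ∀ k : Fin 3, U x lamv i k * Φ x k l
          = U x (lam l) i k * Φ x k l + (if i = k then α i * (lamv - lam l) * Φ x k l else 0) := by
        intro k
        rw [hU, hU]
        by_cases h : i = k
        · subst h; simp only [of_apply, eq_self_iff_true, if_true]; ring
        · simp [h]
      rw [Finset.sum_congr rfl fun k _ => h1 k, Finset.sum_add_distrib]
      simp
    have hcol : ∀ l : Fin N, ∑ k, Ψ x k l * U x lamv k j
        = (∑ k, Ψ x k l * U x (lam l) k j) + α j * (lamv - lam l) * Ψ x j l := by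
      intro l
      have h1 : ∀ k : Fin 3, Ψ x k l * U x lamv k j
          = Ψ x k l * U x (lam l) k j + (if k = j then α j * (lamv - lam l) * Ψ x k l else 0) := by
        intro k
        rw [hU, hU]
        by_cases h : k = j
        · subst h; simp only [of_apply, eq_self_iff_true, if_true]; ring
        · simp [h]
      rw [Finset.sum_congr rfl fun k _ => h1 k, Finset.sum_add_distrib]
      simp
    have hLe : ∀ a b, L x lamv a b
        = (if a = b then γ a else 0) + ∑ l, Φ x a l * Ψ x b l / (lamv - lam l) := by
      intro a b; rw [hL]; rfl
    rw [Matrix.sub_apply, Matrix.mul_apply, Matrix.mul_apply]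
    have e1 : ∑ k, U x lamv i k * L x lamv k j
        = U x lamv i j * γ j
          + ∑ l, (∑ k, U x lamv i k * Φ x k l) * (Ψ x j l / (lamv - lam l)) := by
      simp only [hLe, mul_add, Finset.mul_sum]
      rw [Finset.sum_add_distrib, Finset.sum_comm]
      congr 1
      · rw [Finset.sum_congr rfl fun k _ => (mul_ite _ _ _ _ : U x lamv i k * _ = _)]
        simp
      · refine Finset.sum_congr rfl fun l _ => ?_
        rw [Finset.sum_mul]
        exact Finset.sum_congr rfl fun k _ => by ring
    have e2 : ∑ k, L x lamv i k * U x lamv k j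
        = γ i * U x lamv i j
          + ∑ l, (Φ x i l / (lamv - lam l)) * (∑ k, Ψ x k l * U x lamv k j) := by
      simp only [hLe, add_mul, Finset.sum_mul]
      rw [Finset.sum_add_distrib, Finset.sum_comm]
      congr 1
      · rw [Finset.sum_congr rfl fun k _ => (ite_mul _ _ _ _ : (if i = k then γ i else 0) * _ = _)]
        simp
      · refine Finset.sum_congr rfl fun l _ => ?_
        rw [Finset.mul_sum]
        exact Finset.sum_congr rfl fun k _ => by ring
    rw [e1, e2]
    have e3 : ∑ l, (∑ k, U x lamv i k * Φ x k l) * (Ψ x j l / (lamv - lam l))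
        = (∑ l, (∑ k, U x (lam l) i k * Φ x k l) * (Ψ x j l / (lamv - lam l)))
          + ∑ l, α i * (Φ x i l * Ψ x j l) := by
      rw [← Finset.sum_add_distrib]
      refine Finset.sum_congr rfl fun l _ => ?_
      rw [hrow l]
      field_simp [hd l]
    have e4 : ∑ l, (Φ x i l / (lamv - lam l)) * (∑ k, Ψ x k l * U x lamv k j)
        = (∑ l, (Φ x i l / (lamv - lam l)) * (∑ k, Ψ x k l * U x (lam l) k j))
          + ∑ l, α j * (Φ x i l * Ψ x j l) := by
      rw [← Finset.sum_add_distrib]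
      refine Finset.sum_congr rfl fun l _ => ?_
      rw [hcol l]
      field_simp [hd l]
    rw [e3, e4]
    have e5 : U x lamv i j * γ j - γ i * U x lamv i j
        + (∑ l, α i * (Φ x i l * Ψ x j l)) - ∑ l, α j * (Φ x i l * Ψ x j l) = 0 := by
      rw [← Finset.mul_sum, ← Finset.mul_sum, hU]
      by_cases h : i = j
      · subst h; ring
      · simp only [of_apply, if_neg h]
        have hgg : γ i - γ j ≠ 0 := sub_ne_zero.mpr (hγ i j h)
        have hscal : (α i - α j) / (γ i - γ j) * (γ j - γ i) = α j - α i := by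
          rw [show γ j - γ i = -(γ i - γ j) by ring, mul_neg, div_mul_cancel₀ _ hgg]
          ring
        linear_combination (∑ m : Fin N, Φ x i m * Ψ x j m) * hscal
      
    rw [Finset.sum_sub_distrib]
    linarith [e5]
  rw [key]
  exact hderiv
end

section
/- With the Poisson bracket {f,g} = Σ_{i=1}^3 (⟨∂f/∂Ψ_i, ∂g/∂Φ_i⟩ − ⟨∂f/∂Φ_i, ∂g/∂Ψ_i⟩) on R^{6N}, the two Hamiltonians H^x = − Σ_k α_k ⟨AΦ_k,Ψ_k⟩ − Σ_{k<l} ((α_k−α_l)/(γ_k−γ_l)) ⟨Φ_k,Ψ_l⟩⟨Φ_l,Ψ_k⟩ and H^t = − Σ_k β_k ⟨AΦ_k,Ψ_k⟩ − Σ_{k<l} ((β_k−β_l)/(γ_k−γ_l)) ⟨Φ_k,Ψ_l⟩⟨Φ_l,Ψ_k⟩ are in involution: {H^x, H^t} = 0. -/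
open Finset


lemma sum_upd_lam {N : ℕ} (lam v w : Fin N → ℝ) (m : Fin N) (y : ℝ) :
    ∑ n, lam n * Function.update v m y n * w n
      = (∑ n, lam n * v n * w n) + (y - v m) * (lam m * w m) := by
  have h : ∀ n ∈ (univ : Finset (Fin N)), lam n * Function.update v m y n * w n
      = lam n * v n * w n + (if n = m then (y - v m) * (lam m * w m) else 0) := by
    intro n _
    by_cases h : n = m
    · subst h; simp [Function.update_self]; ring
    · simp [Function.update_of_ne h, h]
  rw [Finset.sum_congr rfl h, Finset.sum_add_distrib, Finset.sum_ite_eq' univ m]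
  simp

lemma sum_upd_mul {N : ℕ} (v w : Fin N → ℝ) (m : Fin N) (y : ℝ) :
    ∑ n, Function.update v m y n * w n
      = (∑ n, v n * w n) + (y - v m) * w m := by
  have h : ∀ n ∈ (univ : Finset (Fin N)), Function.update v m y n * w n
      = v n * w n + (if n = m then (y - v m) * w m else 0) := by
    intro n _
    by_cases h : n = m
    · subst h; simp [Function.update_self]; ring
    · simp [Function.update_of_ne h, h]
  rw [Finset.sum_congr rfl h, Finset.sum_add_distrib, Finset.sum_ite_eq' univ m]
  simp

lemma sum_mul_upd {N : ℕ} (v w : Fin N → ℝ) (m : Fin N) (y : ℝ) :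
    ∑ n, w n * Function.update v m y n
      = (∑ n, w n * v n) + (y - v m) * w m := by
  have h : ∀ n ∈ (univ : Finset (Fin N)), w n * Function.update v m y n
      = w n * v n + (if n = m then (y - v m) * w m else 0) := by
    intro n _
    by_cases h : n = m
    · subst h; simp [Function.update_self]; ring
    · simp [Function.update_of_ne h, h]
  rw [Finset.sum_congr rfl h, Finset.sum_add_distrib, Finset.sum_ite_eq' univ m]
  simp

lemma hd_affine (A c k y0 : ℝ) : HasDerivAt (fun y => A + (y - c) * k) k y0 := by
  simpa using (((hasDerivAt_id y0).sub_const c).mul_const k).const_add A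

lemma hdA {N : ℕ} (lam v w : Fin N → ℝ) (m : Fin N) (y0 : ℝ) :
    HasDerivAt (fun y => ∑ n, lam n * Function.update v m y n * w n) (lam m * w m) y0 := by
  have h : (fun y : ℝ => ∑ n, lam n * Function.update v m y n * w n)
      = fun y => (∑ n, lam n * v n * w n) + (y - v m) * (lam m * w m) :=
    funext fun y => sum_upd_lam lam v w m y
  rw [h]; exact hd_affine _ _ _ _

lemma hdB {N : ℕ} (v w : Fin N → ℝ) (m : Fin N) (y0 : ℝ) :
    HasDerivAt (fun y => ∑ n, Function.update v m y n * w n) (w m) y0 := by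
  have h : (fun y : ℝ => ∑ n, Function.update v m y n * w n)
      = fun y => (∑ n, v n * w n) + (y - v m) * w m :=
    funext fun y => sum_upd_mul v w m y
  rw [h]; exact hd_affine _ _ _ _

lemma hdC {N : ℕ} (v w : Fin N → ℝ) (m : Fin N) (y0 : ℝ) :
    HasDerivAt (fun y => ∑ n, w n * Function.update v m y n) (w m) y0 := by
  have h : (fun y : ℝ => ∑ n, w n * Function.update v m y n)
      = fun y => (∑ n, w n * v n) + (y - v m) * w m :=
    funext fun y => sum_mul_upd v w m y
  rw [h]; exact hd_affine _ _ _ _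

lemma dPlem {N : ℕ} (lam : Fin N → ℝ) (c γ : Fin 3 → ℝ) (P Q : Fin 3 → Fin N → ℝ)
    (i : Fin 3) (m : Fin N) :
    deriv (fun y =>
      -(∑ k, c k * ∑ n, lam n * Function.update P i (Function.update (P i) m y) k n * Q k n)
      - ∑ k, ∑ l, (if k < l then (c k - c l) / (γ k - γ l) *
          ((∑ n, Function.update P i (Function.update (P i) m y) k n * Q l n) *
           (∑ n, Function.update P i (Function.update (P i) m y) l n * Q k n)) else 0)) (P i m)
    = -(c i * (lam m * Q i m))
      - ∑ j, (if j = i then 0 else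
          (if i < j then (c i - c j) / (γ i - γ j) else (c j - c i) / (γ j - γ i))
            * (Q j m * ∑ n, P j n * Q i n)) := by
  have H : HasDerivAt (fun y =>
      -(∑ k, c k * ∑ n, lam n * Function.update P i (Function.update (P i) m y) k n * Q k n)
      - ∑ k, ∑ l, (if k < l then (c k - c l) / (γ k - γ l) *
          ((∑ n, Function.update P i (Function.update (P i) m y) k n * Q l n) *
           (∑ n, Function.update P i (Function.update (P i) m y) l n * Q k n)) else 0))
      (-(∑ k, if k = i then c k * (lam m * Q k m) else 0)
       - ∑ k, ∑ l, (if k < l then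
            (if k = i then (c k - c l) / (γ k - γ l) * (Q l m * ∑ n, P l n * Q k n)
             else if l = i then (c k - c l) / (γ k - γ l) * ((∑ n, P k n * Q l n) * Q k m)
             else 0)
          else 0)) (P i m) := by
    apply HasDerivAt.sub
    · apply HasDerivAt.neg
      apply HasDerivAt.fun_sum
      intro k _
      by_cases hk : k = i
      · subst hk
        simp only [Function.update_self, if_pos rfl]
        exact (hdA lam (P k) (Q k) m (P k m)).const_mul (c k)
      · simp only [Function.update_of_ne hk, if_neg hk]
        exact hasDerivAt_const _ _
    · apply HasDerivAt.fun_sum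
      intro k _
      apply HasDerivAt.fun_sum
      intro l _
      by_cases hkl : k < l
      · simp only [if_pos hkl]
        by_cases hk : k = i
        · subst hk
          have hl : l ≠ k := (ne_of_gt hkl)
          simp only [Function.update_self, Function.update_of_ne hl, if_pos rfl]
          exact ((hdB (P k) (Q l) m (P k m)).mul_const (∑ n, P l n * Q k n)).const_mul _
        · by_cases hl : l = i
          · subst hl
            have hk' : k ≠ l := ne_of_lt hkl
            simp only [Function.update_self, Function.update_of_ne hk', if_neg hk, if_pos rfl]
            exact (HasDerivAt.const_mul (∑ n, P k n * Q l n)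
              (hdB (P l) (Q k) m (P l m))).const_mul _
          · simp only [Function.update_of_ne hk, Function.update_of_ne hl, if_neg hk, if_neg hl]
            exact hasDerivAt_const _ _
      · simp only [if_neg hkl]
        exact hasDerivAt_const _ _
  rw [H.deriv]
  fin_cases i <;> simp [Fin.sum_univ_three] <;> ring_nf <;> try tauto

lemma dQlem {N : ℕ} (lam : Fin N → ℝ) (c γ : Fin 3 → ℝ) (P Q : Fin 3 → Fin N → ℝ)
    (i : Fin 3) (m : Fin N) :
    deriv (fun y =>
      -(∑ k, c k * ∑ n, lam n * P k n * Function.update Q i (Function.update (Q i) m y) k n)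
      - ∑ k, ∑ l, (if k < l then (c k - c l) / (γ k - γ l) *
          ((∑ n, P k n * Function.update Q i (Function.update (Q i) m y) l n) *
           (∑ n, P l n * Function.update Q i (Function.update (Q i) m y) k n)) else 0)) (Q i m)
    = -(c i * (lam m * P i m))
      - ∑ j, (if j = i then 0 else
          (if i < j then (c i - c j) / (γ i - γ j) else (c j - c i) / (γ j - γ i))
            * (P j m * ∑ n, P i n * Q j n)) := by
  have H : HasDerivAt (fun y =>
      -(∑ k, c k * ∑ n, lam n * P k n * Function.update Q i (Function.update (Q i) m y) k n)
      - ∑ k, ∑ l, (if k < l then (c k - c l) / (γ k - γ l) *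
          ((∑ n, P k n * Function.update Q i (Function.update (Q i) m y) l n) *
           (∑ n, P l n * Function.update Q i (Function.update (Q i) m y) k n)) else 0))
      (-(∑ k, if k = i then c k * (lam m * P k m) else 0)
       - ∑ k, ∑ l, (if k < l then
            (if k = i then (c k - c l) / (γ k - γ l) * ((∑ n, P k n * Q l n) * P l m)
             else if l = i then (c k - c l) / (γ k - γ l) * (P k m * (∑ n, P l n * Q k n))
             else 0)
          else 0)) (Q i m) := by
    apply HasDerivAt.sub
    · apply HasDerivAt.neg
      apply HasDerivAt.fun_sum
      intro k _
      by_cases hk : k = i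
      · subst hk
        simp only [Function.update_self, if_pos rfl]
        have h := hdC (Q k) (fun n => lam n * P k n) m (Q k m)
        simpa using h.const_mul (c k)
      · simp only [Function.update_of_ne hk, if_neg hk]
        exact hasDerivAt_const _ _
    · apply HasDerivAt.fun_sum
      intro k _
      apply HasDerivAt.fun_sum
      intro l _
      by_cases hkl : k < l
      · simp only [if_pos hkl]
        by_cases hk : k = i
        · subst hk
          have hl : l ≠ k := (ne_of_gt hkl)
          simp only [Function.update_self, Function.update_of_ne hl, if_pos rfl]
          exact ((hdC (Q k) (P l) m (Q k m)).const_mul (∑ n, P k n * Q l n)).const_mul _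
        · by_cases hl : l = i
          · subst hl
            have hk' : k ≠ l := ne_of_lt hkl
            simp only [Function.update_self, Function.update_of_ne hk', if_neg hk, if_pos rfl]
            exact ((hdC (Q l) (P k) m (Q l m)).mul_const (∑ n, P l n * Q k n)).const_mul _
          · simp only [Function.update_of_ne hk, Function.update_of_ne hl, if_neg hk, if_neg hl]
            exact hasDerivAt_const _ _
      · simp only [if_neg hkl]
        exact hasDerivAt_const _ _
  rw [H.deriv]
  fin_cases i <;> simp [Fin.sum_univ_three] <;> ring_nf <;> try tauto

lemma keylem {N : ℕ} (lam x x' y1 y2 z1 z2 : Fin N → ℝ)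
    (a b e1 e2 f1 f2 s1 s2 r1 r2 : ℝ) :
    ∑ m, ((-(a * (lam m * x m)) - (e1 * (y1 m * s1) + e2 * (y2 m * s2)))
        * (-(b * (lam m * x' m)) - (f1 * (z1 m * r1) + f2 * (z2 m * r2)))
      - (-(a * (lam m * x' m)) - (e1 * (z1 m * r1) + e2 * (z2 m * r2)))
        * (-(b * (lam m * x m)) - (f1 * (y1 m * s1) + f2 * (y2 m * s2))))
    = (a * f1 - b * e1) * (r1 * (∑ m, lam m * (x m * z1 m)) - s1 * (∑ m, lam m * (y1 m * x' m)))
    + (a * f2 - b * e2) * (r2 * (∑ m, lam m * (x m * z2 m)) - s2 * (∑ m, lam m * (y2 m * x' m)))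
    + (e1 * f2 - e2 * f1) * (s1 * r2 * (∑ m, y1 m * z2 m) - r1 * s2 * (∑ m, y2 m * z1 m)) := by
  have h : ∀ m ∈ (univ : Finset (Fin N)),
      ((-(a * (lam m * x m)) - (e1 * (y1 m * s1) + e2 * (y2 m * s2)))
        * (-(b * (lam m * x' m)) - (f1 * (z1 m * r1) + f2 * (z2 m * r2)))
      - (-(a * (lam m * x' m)) - (e1 * (z1 m * r1) + e2 * (z2 m * r2)))
        * (-(b * (lam m * x m)) - (f1 * (y1 m * s1) + f2 * (y2 m * s2))))
      = ((a * f1 - b * e1) * r1) * (lam m * (x m * z1 m))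
        - ((a * f1 - b * e1) * s1) * (lam m * (y1 m * x' m))
        + ((a * f2 - b * e2) * r2) * (lam m * (x m * z2 m))
        - ((a * f2 - b * e2) * s2) * (lam m * (y2 m * x' m))
        + ((e1 * f2 - e2 * f1) * (s1 * r2)) * (y1 m * z2 m)
        - ((e1 * f2 - e2 * f1) * (r1 * s2)) * (y2 m * z1 m) := by
    intro m _; ring
  rw [Finset.sum_congr rfl h]
  simp only [Finset.sum_add_distrib, Finset.sum_sub_distrib, ← Finset.mul_sum]
  ring


set_option maxHeartbeats 2000000 in

/-- With the Poisson bracket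
`{f,g} = Σ_i (⟨∂f/∂Ψ_i, ∂g/∂Φ_i⟩ - ⟨∂f/∂Φ_i, ∂g/∂Ψ_i⟩)` on `ℝ^{6N}`, the
Hamiltonians `H^x = -Σ_k α_k ⟨AΦ_k,Ψ_k⟩ - Σ_{k<l} ((α_k-α_l)/(γ_k-γ_l)) ⟨Φ_k,Ψ_l⟩⟨Φ_l,Ψ_k⟩`
and `H^t = -Σ_k β_k ⟨AΦ_k,Ψ_k⟩ - Σ_{k<l} ((β_k-β_l)/(γ_k-γ_l)) ⟨Φ_k,Ψ_l⟩⟨Φ_l,Ψ_k⟩`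
are in involution: `{H^x, H^t} = 0`. -/
theorem stmt13 (N : ℕ) (α β γ : Fin 3 → ℝ) (hγ : ∀ i j, i ≠ j → γ i ≠ γ j)
    (lam : Fin N → ℝ)
    (PB : ((Fin 3 → Fin N → ℝ) → (Fin 3 → Fin N → ℝ) → ℝ)
        → ((Fin 3 → Fin N → ℝ) → (Fin 3 → Fin N → ℝ) → ℝ)
        → (Fin 3 → Fin N → ℝ) → (Fin 3 → Fin N → ℝ) → ℝ)
    (hPB : PB = fun f g P Q => ∑ i : Fin 3, ∑ m : Fin N,
      (deriv (fun y => f P (Function.update Q i (Function.update (Q i) m y))) (Q i m)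
        * deriv (fun y => g (Function.update P i (Function.update (P i) m y)) Q) (P i m)
      - deriv (fun y => f (Function.update P i (Function.update (P i) m y)) Q) (P i m)
        * deriv (fun y => g P (Function.update Q i (Function.update (Q i) m y))) (Q i m)))
    (Hx Ht : (Fin 3 → Fin N → ℝ) → (Fin 3 → Fin N → ℝ) → ℝ)
    (hHx : Hx = fun P Q =>
      -(∑ k, α k * ∑ m, lam m * P k m * Q k m)
        - ∑ k, ∑ l, (if k < l then
            (α k - α l) / (γ k - γ l) * ((∑ m, P k m * Q l m) * (∑ m, P l m * Q k m))
          else 0))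
    (hHt : Ht = fun P Q =>
      -(∑ k, β k * ∑ m, lam m * P k m * Q k m)
        - ∑ k, ∑ l, (if k < l then
            (β k - β l) / (γ k - γ l) * ((∑ m, P k m * Q l m) * (∑ m, P l m * Q k m))
          else 0)) :
    ∀ P Q : Fin 3 → Fin N → ℝ, PB Hx Ht P Q = 0 := by
  intro P Q
  simp only [hPB, hHx, hHt]
  simp only [dPlem, dQlem]
  simp only [Fin.sum_univ_three, Fin.reduceEq, Fin.reduceLT, ite_true, ite_false, if_true, if_false, zero_add, add_zero]
  rw [keylem, keylem, keylem]
  have h01 : γ 0 - γ 1 ≠ 0 := sub_ne_zero.mpr (hγ 0 1 (by decide))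
  have h02 : γ 0 - γ 2 ≠ 0 := sub_ne_zero.mpr (hγ 0 2 (by decide))
  have h12 : γ 1 - γ 2 ≠ 0 := sub_ne_zero.mpr (hγ 1 2 (by decide))
  field_simp
  ring
end

section
/- For i = 1,2,3, the first coefficients F_{i1} in the expansion F_i(λ) = F_{i0} + F_{i1}λ^{−1} + O(λ^{−2}) of the characteristic-polynomial coefficients of L(λ) are: F_{11} = Σ_{k=1}^3 ⟨Φ_k,Ψ_k⟩, F_{21} = Σ_{k=1}^3 (F_{10} − γ_k)⟨Φ_k,Ψ_k⟩, and F_{31} = Σ_{k=1}^3 (F_{20} − γ_k(F_{10} − γ_k))⟨Φ_k,Ψ_k⟩, where F_{10} = γ_1+γ_2+γ_3 and F_{20} = γ_1γ_2+γ_1γ_3+γ_2γ_3. -/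
/-!
Write `L(λ) = D + λ⁻¹ B(λ)` with `D = diag γ`, so that `B(λ) = λ (L(λ) - D) → A = Σ_l φ_l ψ_lᵀ`.
Each `F_i` is a polynomial in the matrix entries, hence `F_i(D + tY) = F_i(D) + t G_i(t, Y)` with
`G_i` jointly continuous, and `λ (F_i(L(λ)) - F_i(D)) = G_i(λ⁻¹, B(λ)) → G_i(0, A)`, the derivative of
`F_i` at `D` in the direction `A`. For the three invariants this derivative is `tr A`,
`tr D tr A - tr (D A)` and `tr (adj D · A)`, whose diagonal forms are the stated coefficients.
-/

open Filter Topology Matrix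

theorem tendsto_mul_sub_of_expansion {X : Type*} [AddCommGroup X] [Module ℝ X]
    [TopologicalSpace X] {f : X → ℝ} {g : ℝ → X → ℝ} {D A : X} {L : ℝ → X}
    (hf : ∀ t Y, f (D + t • Y) = f D + t * g t Y)
    (hg : ContinuousAt (Function.uncurry g) (0, A))
    (hL : Tendsto (fun x => x • (L x - D)) atTop (𝓝 A)) :
    Tendsto (fun x => x * (f (L x) - f D)) atTop (𝓝 (g 0 A)) := by
  refine (hg.tendsto.comp (tendsto_inv_atTop_zero.prodMk_nhds hL)).congr' ?_
  filter_upwards [eventually_ne_atTop 0] with x hx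
  have h := hf x⁻¹ (x • (L x - D))
  rw [inv_smul_smul₀ hx, add_sub_cancel] at h
  rw [h, add_sub_cancel_left, ← mul_assoc, mul_inv_cancel₀ hx, one_mul]
  rfl

theorem tendsto_mul_div_sub_atTop (c a : ℝ) :
    Tendsto (fun x => x * (c / (x - a))) atTop (𝓝 c) := by
  have h : Tendsto (fun x => c + c * a / (x - a)) atTop (𝓝 (c + 0)) :=
    tendsto_const_nhds.add <|
      tendsto_const_nhds.div_atTop <| tendsto_atTop_add_const_right _ _ tendsto_id
  rw [add_zero] at h
  refine h.congr' ?_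
  filter_upwards [eventually_gt_atTop a] with x hx
  field_simp [sub_ne_zero.mpr hx.ne']
  ring

theorem tendsto_smul_of_sum_div_sub {n ι : Type*} [Fintype ι] (c : n → n → ι → ℝ) (a : ι → ℝ) :
    Tendsto (fun x => x • Matrix.of fun i j => ∑ l, c i j l / (x - a l)) atTop
      (𝓝 (Matrix.of fun i j => ∑ l, c i j l)) := by
  refine tendsto_pi_nhds.2 fun i => tendsto_pi_nhds.2 fun j => ?_
  simpa only [Matrix.smul_apply, of_apply, smul_eq_mul, Finset.mul_sum] using
    tendsto_finsetSum _ fun l _ => tendsto_mul_div_sub_atTop (c i j l) (a l)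

section Invariants

variable {n R : Type*} [Fintype n] [CommRing R]

theorem trace_add_smul (D : Matrix n n R) (t : R) (Y : Matrix n n R) :
    trace (D + t • Y) = trace D + t * trace Y := by
  rw [trace_add, trace_smul, smul_eq_mul]

variable [DecidableEq n]

theorem sq_trace_sub_trace_sq_add_smul (D : Matrix n n R) (t : R) (Y : Matrix n n R) :
    trace (D + t • Y) ^ 2 - trace ((D + t • Y) ^ 2) = trace D ^ 2 - trace (D ^ 2)
      + t * (2 * (trace D * trace Y - trace (D * Y)) + t * (trace Y ^ 2 - trace (Y ^ 2))) := by
  simp only [sq, add_mul, mul_add, trace_add, smul_mul, Matrix.mul_smul, trace_smul, smul_eq_mul,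
    trace_mul_comm Y D]
  ring

theorem trace_diagonal_mul_trace_sub_trace_diagonal_mul (γ : n → R) (A : Matrix n n R) :
    trace (diagonal γ) * trace A - trace (diagonal γ * A) = ∑ k, (∑ j, γ j - γ k) * A k k := by
  simp [trace, Finset.mul_sum, Finset.sum_sub_distrib, sub_mul]

end Invariants

section FinThree

variable {R : Type*} [CommRing R]

theorem det_add_smul_fin_three (D : Matrix (Fin 3) (Fin 3) R) (t : R)
    (Y : Matrix (Fin 3) (Fin 3) R) :
    det (D + t • Y) = det D
      + t * (trace (adjugate D * Y) + t * trace (D * adjugate Y) + t ^ 2 * det Y) := by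
  simp [det_fin_three, adjugate_fin_three, trace_fin_three, mul_apply, vecMul, dotProduct,
    Fin.sum_univ_three]
  ring

theorem trace_adjugate_diagonal_mul_fin_three (γ : Fin 3 → R) (A : Matrix (Fin 3) (Fin 3) R) :
    trace (adjugate (diagonal γ) * A) = ∑ k, ((γ 0 * γ 1 + γ 0 * γ 2 + γ 1 * γ 2)
      - γ k * ((γ 0 + γ 1 + γ 2) - γ k)) * A k k := by
  rw [adjugate_fin_three]
  simp [trace_fin_three, vecMul, dotProduct, Fin.sum_univ_three]
  ring

end FinThree

/-- The coefficients of `λ⁻¹` in the Laurent expansions at `λ = ∞`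
of `F₁ = tr L`, `F₂ = ½((tr L)² - tr L²)`, `F₃ = det L` are
`F₁₁ = Σ_k ⟨Φ_k,Ψ_k⟩`, `F₂₁ = Σ_k (F₁₀ - γ_k)⟨Φ_k,Ψ_k⟩`,
`F₃₁ = Σ_k (F₂₀ - γ_k(F₁₀ - γ_k))⟨Φ_k,Ψ_k⟩`, with `F₁₀ = γ₁+γ₂+γ₃`,
`F₂₀ = γ₁γ₂+γ₁γ₃+γ₂γ₃`. -/
theorem stmt15 (N : ℕ) (γ : Fin 3 → ℝ) (lam : Fin N → ℝ)
    (φ ψ : Fin 3 → Fin N → ℝ)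
    (L : ℝ → Matrix (Fin 3) (Fin 3) ℝ)
    (hL : ∀ lamv, L lamv = Matrix.of fun i j =>
      (if i = j then γ i else 0) + ∑ l, φ i l * ψ j l / (lamv - lam l)) :
    Tendsto (fun lamv => lamv * ((L lamv).trace - (γ 0 + γ 1 + γ 2))) atTop
        (nhds (∑ k, ∑ m, φ k m * ψ k m))
    ∧ Tendsto (fun lamv => lamv *
          (1 / 2 * ((L lamv).trace ^ 2 - (L lamv ^ 2).trace)
            - (γ 0 * γ 1 + γ 0 * γ 2 + γ 1 * γ 2))) atTop
        (nhds (∑ k, ((γ 0 + γ 1 + γ 2) - γ k) * ∑ m, φ k m * ψ k m))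
    ∧ Tendsto (fun lamv => lamv * ((L lamv).det - γ 0 * γ 1 * γ 2)) atTop
        (nhds (∑ k, ((γ 0 * γ 1 + γ 0 * γ 2 + γ 1 * γ 2)
            - γ k * ((γ 0 + γ 1 + γ 2) - γ k)) * ∑ m, φ k m * ψ k m)) := by
  have hB : Tendsto (fun x => x • (L x - diagonal γ)) atTop
      (𝓝 (Matrix.of fun i j => ∑ m, φ i m * ψ j m)) := by
    convert tendsto_smul_of_sum_div_sub (fun i j l => φ i l * ψ j l) lam using 2 with x
    ext i j
    simp [hL, diagonal_apply]
  refine ⟨?_, ?_, ?_⟩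
  · convert tendsto_mul_sub_of_expansion (g := fun _ Y => trace Y) (trace_add_smul _)
      (by fun_prop) hB using 3 <;>
      simp [trace, Fin.sum_univ_three]
  · have hf : ∀ (t : ℝ) (Y : Matrix (Fin 3) (Fin 3) ℝ),
        1 / 2 * (trace (diagonal γ + t • Y) ^ 2 - trace ((diagonal γ + t • Y) ^ 2))
          = 1 / 2 * (trace (diagonal γ) ^ 2 - trace (diagonal γ ^ 2)) + t * (
            (trace (diagonal γ) * trace Y - trace (diagonal γ * Y))
              + t * (1 / 2 * (trace Y ^ 2 - trace (Y ^ 2)))) := by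
      intro t Y
      rw [sq_trace_sub_trace_sq_add_smul]
      ring
    convert tendsto_mul_sub_of_expansion
      (f := fun M => 1 / 2 * (trace M ^ 2 - trace (M ^ 2))) hf (by fun_prop) hB using 3
    · simp [sq, Fin.sum_univ_three]
      ring
    · simp only [zero_mul, add_zero, trace_diagonal_mul_trace_sub_trace_diagonal_mul,
        Fin.sum_univ_three, of_apply]
  · convert tendsto_mul_sub_of_expansion
      (g := fun t Y => trace (adjugate (diagonal γ) * Y) + t * trace (diagonal γ * adjugate Y)
        + t ^ 2 * det Y) (det_add_smul_fin_three _) (by fun_prop) hB using 3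
    · simp [Fin.prod_univ_three]
    · simp only [zero_mul, add_zero, zero_pow two_ne_zero, trace_adjugate_diagonal_mul_fin_three,
        of_apply]
end
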